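/- Let a and b be nonempty lists of even nonzero integers and let c be an integer with |2c| ≥ 4 (i.e. |c| ≥ 2). Then d([a ⧺ (2c) ⧺ b]) = 1 + d([a]) + d([b]), where ⧺ denotes list concatenation and (2c) is the one-entry list containing 2c. -/

import Mathlib

/-- The continued fraction value `[a₁, …, aₙ] = 1/(a₁ + 1/(a₂ + ⋯ + 1/aₙ))` of a
list of integers, defined recursively with `[] = 0`, using the total division of `ℚ`. -/
def cfVal : List ℤ → ℚ
  | [] => 0
  | a :: l => 1 / ((a : ℚ) + cfVal l)

/-- `u` and `v` are the two Farey parents of `x`: there are integers `a, b, c, d` with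
`1 ≤ b, d`, `b + d = q`, `a + c = p`, `a·d − b·c = ±1`, `u = a/b` and `v = c/d`,
where `x = p/q` in lowest terms. -/
def IsFareyParents (x u v : ℚ) : Prop :=
  ∃ a b c d : ℤ, 1 ≤ b ∧ 1 ≤ d ∧ b + d = (x.den : ℤ) ∧ a + c = x.num ∧
    (a * d - b * c = 1 ∨ a * d - b * c = -1) ∧
    u = (a : ℚ) / (b : ℚ) ∧ v = (c : ℚ) / (d : ℚ)

/-- The graph of the depth function on `ℚ`: integers have depth `0`, and otherwise
`d(x) = 1 + min(d(u), d(v))` where `u, v` are the two Farey parents of `x`. -/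
inductive DepthRel : ℚ → ℕ → Prop
  | int (x : ℚ) (h : x.den = 1) : DepthRel x 0
  | step (x u v : ℚ) (m k : ℕ) (h : x.den ≠ 1) (hp : IsFareyParents x u v)
      (hu : DepthRel u m) (hv : DepthRel v k) : DepthRel x (1 + min m k)

/-- The depth `d(x)` of a rational number. -/
noncomputable def fareyDepth (x : ℚ) : ℕ := sInf {n | DepthRel x n}

/-!
If all entries of `x = [a₁, …, aₙ]` have absolute value at least `2`, the Farey parents of `x`
are `[a₁, …, aₙ₋₁]` and `[a₁, …, aₙ - sign aₙ]`: with `pₖ / qₖ` the convergents,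
`x = (pₙ₋₂ + aₙ pₙ₋₁) / (qₙ₋₂ + aₙ qₙ₋₁)` is the mediant of `pₙ₋₁ / qₙ₋₁` and
`(pₙ₋₂ + (aₙ - sign aₙ) pₙ₋₁) / (qₙ₋₂ + (aₙ - sign aₙ) qₙ₋₁)`, a pair of determinant `±1`.
A last entry `±1` is absorbed by its neighbour, `[…, b, ±1] = […, b ± 1]`, so the depth obeys a
recursion in the last entry. Running this recursion on the entries of `b` in `[a ⧺ (2c) ⧺ b]`
and in `[b]` side by side, the two depths differ by `1 + d([a])` throughout: when `b` is used
up, `2c` has become `2c` or `2c ± 1`, and appending an entry `m` with `|m| ≥ 3` to a continued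
fraction with entries of absolute value at least `2` raises its depth by exactly one.
-/

theorem farey_pair_eq_of_det_eq {a b c d a' b' c' d' : ℤ} (hb : 1 ≤ b) (hd : 1 ≤ d)
    (hb' : 1 ≤ b') (hd' : 1 ≤ d') (hq : b + d = b' + d') (hp : a + c = a' + c')
    (hunit : a * d - b * c = 1 ∨ a * d - b * c = -1)
    (hdet : a * d - b * c = a' * d' - b' * c') : a = a' ∧ b = b' := by
  -- `a * d - b * c = a * (b + d) - b * (a + c)`, so `b` is determined modulo `b + d`
  have hcop : IsCoprime (b + d) (a + c) := by
    rcases hunit with h | h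
    · exact ⟨a, -b, by linear_combination h⟩
    · exact ⟨-a, b, by linear_combination -h⟩
  have hmul : (b + d) * (a - a') = (b - b') * (a + c) := by
    obtain rfl : d' = b + d - b' := by omega
    obtain rfl : c' = a + c - a' := by omega
    linear_combination hdet
  obtain rfl : b = b' := by
    have hdvd : b + d ∣ b - b' := hcop.dvd_of_dvd_mul_right ⟨a - a', hmul.symm⟩
    have := Int.eq_zero_of_abs_lt_dvd hdvd (by rw [abs_lt]; omega)
    omega
  have : (b + d) * (a - a') = 0 := by rw [hmul]; ring
  rcases mul_eq_zero.mp this with h | h <;> [omega; exact ⟨by omega, rfl⟩]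

theorem IsFareyParents.eq_or_eq_swap {x u v u' v' : ℚ} (h : IsFareyParents x u v)
    (h' : IsFareyParents x u' v') : (u = u' ∧ v = v') ∨ (u = v' ∧ v = u') := by
  obtain ⟨a, b, c, d, hb, hd, hq, hp, hunit, rfl, rfl⟩ := h
  obtain ⟨a', b', c', d', hb', hd', hq', hp', hunit', rfl, rfl⟩ := h'
  by_cases hs : a * d - b * c = a' * d' - b' * c'
  · obtain ⟨rfl, rfl⟩ := farey_pair_eq_of_det_eq (a' := a') (c' := c') (d' := d')
      hb hd hb' hd' (by omega) (by omega) hunit hs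
    exact .inl ⟨rfl, by rw [show c = c' by omega, show d = d' by omega]⟩
  · obtain ⟨rfl, rfl⟩ := farey_pair_eq_of_det_eq (a' := c') (c' := a') (d' := b')
      hb hd hd' hb' (by omega) (by omega) hunit (by grind)
    exact .inr ⟨rfl, by rw [show c = a' by omega, show d = b' by omega]⟩

theorem Rat.den_div_intCast_le {a b : ℤ} (hb : 0 < b) : (((a : ℚ) / b).den : ℤ) ≤ b :=
  Int.le_of_dvd hb (by rw [← Rat.divInt_eq_div]; exact Rat.den_dvd a b)

theorem IsFareyParents.den_lt {x u v : ℚ} (h : IsFareyParents x u v) :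
    u.den < x.den ∧ v.den < x.den := by
  obtain ⟨a, b, c, d, hb, hd, hq, -, -, rfl, rfl⟩ := h
  have := Rat.den_div_intCast_le (a := a) hb
  have := Rat.den_div_intCast_le (a := c) hd
  omega

theorem IsFareyParents.den_ne_one {x u v : ℚ} (h : IsFareyParents x u v) : x.den ≠ 1 := by
  obtain ⟨a, b, c, d, hb, hd, hq, -⟩ := h
  omega

theorem exists_isFareyParents {x : ℚ} (hx : x.den ≠ 1) : ∃ u v, IsFareyParents x u v := by
  set p := x.num
  set q : ℤ := (x.den : ℤ)
  have hq : 2 ≤ q := by have := x.den_pos; omega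
  -- Bézout: `b * p ≡ -1 [ZMOD q]` for some `0 < b < q`
  obtain ⟨m, n, hmn⟩ := Rat.isCoprime_num_den x
  set b := -m % q
  have hb0 : 0 ≤ b := Int.emod_nonneg _ (by omega)
  have hbq : b < q := Int.emod_lt_of_pos _ (by omega)
  obtain ⟨a, ha⟩ : q ∣ b * p + 1 :=
    ⟨n - p * (-m / q), by linear_combination p * Int.emod_def (-m) q - hmn⟩
  have hb1 : 1 ≤ b := by
    by_contra hb
    have : q ∣ 1 := ⟨a, by rw [← ha, show b = 0 by omega]; ring⟩
    have := Int.le_of_dvd one_pos this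
    omega
  exact ⟨_, _, a, b, p - a, q - b, hb1, by omega, by ring, by ring,
    .inl (by linear_combination -ha), rfl, rfl⟩

theorem exists_depthRel (x : ℚ) : ∃ n, DepthRel x n := by
  induction h : x.den using Nat.strong_induction_on generalizing x with
  | _ q ih =>
    by_cases hx : x.den = 1
    · exact ⟨0, .int x hx⟩
    obtain ⟨u, v, huv⟩ := exists_isFareyParents hx
    obtain ⟨hu, hv⟩ := huv.den_lt
    obtain ⟨m, hm⟩ := ih _ (h ▸ hu) u rfl
    obtain ⟨k, hk⟩ := ih _ (h ▸ hv) v rfl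
    exact ⟨_, .step x u v m k hx huv hm hk⟩

theorem DepthRel.unique {x : ℚ} {n n' : ℕ} (h : DepthRel x n) (h' : DepthRel x n') : n = n' := by
  induction hq : x.den using Nat.strong_induction_on generalizing x n n' with
  | _ q ih =>
    cases h with
    | int _ hx => cases h' with
      | int => rfl
      | step _ _ _ _ _ hx' => exact absurd hx hx'
    | step _ u v m k hx huv hu hv => cases h' with
      | int _ hx' => exact absurd hx' hx
      | step _ u' v' m' k' _ huv' hu' hv' =>
        obtain ⟨hul, hvl⟩ := huv.den_lt
        rw [hq] at hul hvl
        rcases huv.eq_or_eq_swap huv' with ⟨rfl, rfl⟩ | ⟨rfl, rfl⟩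
        · rw [ih _ hul hu hu' rfl, ih _ hvl hv hv' rfl]
        · rw [ih _ hul hu hv' rfl, ih _ hvl hv hu' rfl, min_comm]

theorem depthRel_fareyDepth (x : ℚ) : DepthRel x (fareyDepth x) :=
  Nat.sInf_mem (exists_depthRel x)

theorem fareyDepth_eq_of_depthRel {x : ℚ} {n : ℕ} (h : DepthRel x n) : fareyDepth x = n :=
  (depthRel_fareyDepth x).unique h

theorem fareyDepth_eq_zero_of_den_eq_one {x : ℚ} (hx : x.den = 1) : fareyDepth x = 0 :=
  fareyDepth_eq_of_depthRel (.int x hx)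

theorem IsFareyParents.fareyDepth_eq {x u v : ℚ} (h : IsFareyParents x u v) :
    fareyDepth x = 1 + min (fareyDepth u) (fareyDepth v) :=
  fareyDepth_eq_of_depthRel
    (.step x u v _ _ h.den_ne_one h (depthRel_fareyDepth u) (depthRel_fareyDepth v))

theorem isFareyParents_of_pos {a b c d : ℤ} (hb : 0 < b) (hd : 0 < d)
    (hdet : a * d - b * c = 1 ∨ a * d - b * c = -1) :
    IsFareyParents (((a + c : ℤ) : ℚ) / ((b + d : ℤ) : ℚ)) (a / b) (c / d) := by
  have hcop : Nat.Coprime (a + c).natAbs (b + d).natAbs := by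
    apply Int.isCoprime_iff_gcd_eq_one.mp
    rcases hdet with h | h
    · exact ⟨-b, a, by linear_combination h⟩
    · exact ⟨b, -a, by linear_combination -h⟩
  refine ⟨a, b, c, d, hb, hd, ?_, ?_, hdet, rfl, rfl⟩
  · rw [Rat.den_div_eq_of_coprime (by omega) hcop]
  · rw [Rat.num_div_eq_of_coprime (by omega) hcop]

theorem isFareyParents_of_det {a b c d : ℤ} (hbd : 0 < b * d)
    (hdet : a * d - b * c = 1 ∨ a * d - b * c = -1) :
    IsFareyParents ((a + c : ℚ) / (b + d)) (a / b) (c / d) := by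
  rcases pos_and_pos_or_neg_and_neg_of_mul_pos hbd with ⟨hb, hd⟩ | ⟨hb, hd⟩
  · exact_mod_cast isFareyParents_of_pos hb hd hdet
  · have := isFareyParents_of_pos (a := -a) (c := -c) (neg_pos.mpr hb) (neg_pos.mpr hd)
      (by rcases hdet with h | h <;> [left; right] <;> linear_combination h)
    push_cast at this
    rwa [← neg_add, ← neg_add, neg_div_neg_eq, neg_div_neg_eq, neg_div_neg_eq] at this

theorem cfVal_reverse_append (r m : List ℤ) :
    cfVal (r.reverse ++ m) = r.foldl (fun (t : ℚ) (a : ℤ) => 1 / (a + t)) (cfVal m) := by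
  induction r generalizing m with
  | nil => rfl
  | cons a r ih => simpa [cfVal] using ih (a :: m)

theorem cfVal_reverse_cons_cons_of_isUnit {e : ℤ} (he : IsUnit e) (b : ℤ) (r : List ℤ) :
    cfVal (e :: b :: r).reverse = cfVal ((b + e) :: r).reverse := by
  have : cfVal [b, e] = cfVal [b + e] := by
    rcases Int.isUnit_iff.mp he with rfl | rfl <;> norm_num [cfVal]
  rw [List.reverse_cons, List.reverse_cons, List.append_assoc, List.reverse_cons,
    cfVal_reverse_append, cfVal_reverse_append]
  simp only [List.singleton_append, this]

def TwoLeAbs (r : List ℤ) : Prop := ∀ a ∈ r, 2 ≤ |a|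

namespace TwoLeAbs

variable {a : ℤ} {r : List ℤ}

theorem head (h : TwoLeAbs (a :: r)) : 2 ≤ |a| :=
  h a List.mem_cons_self

theorem of_cons (h : TwoLeAbs (a :: r)) : TwoLeAbs r :=
  fun b hb => h b (List.mem_cons_of_mem a hb)

theorem tail (h : TwoLeAbs r) : TwoLeAbs r.tail :=
  fun b hb => h b (List.mem_of_mem_tail hb)

theorem zero_notMem (h : TwoLeAbs r) : 0 ∉ r :=
  fun h0 => by simpa using h 0 h0

theorem append_cons {l : List ℤ} (hl : TwoLeAbs l) (ha : 2 ≤ |a|) (hr : TwoLeAbs r) :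
    TwoLeAbs (l ++ a :: r) := by
  intro b hb
  rcases List.mem_append.mp hb with hb | hb
  · exact hl b hb
  · rcases List.mem_cons.mp hb with rfl | hb
    exacts [ha, hr b hb]

theorem reverse_of_even {l : List ℤ} (h : ∀ a ∈ l, Even a ∧ a ≠ 0) : TwoLeAbs l.reverse := by
  intro a ha
  obtain ⟨⟨k, rfl⟩, h0⟩ := h a (List.mem_reverse.mp ha)
  grind

end TwoLeAbs

/-- Numerators and denominators `((pₙ₋₁, qₙ₋₁), (pₙ, qₙ))` of the last two convergents of the
continued fraction whose entries, last one first, are `r`; `p₋₁ / q₋₁ = 1 / 0` and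
`p₀ / q₀ = 0 / 1`. -/
def lastConvergents : List ℤ → (ℤ × ℤ) × (ℤ × ℤ)
  | [] => ((1, 0), (0, 1))
  | a :: r => ((lastConvergents r).2, (lastConvergents r).1 + a • (lastConvergents r).2)

section Convergents

variable {r : List ℤ} {p' q' p q : ℤ}

theorem lastConvergents_nil (h : lastConvergents [] = ((p', q'), (p, q))) :
    p' = 1 ∧ q' = 0 ∧ p = 0 ∧ q = 1 := by
  simp only [lastConvergents, Prod.mk.injEq] at h
  omega

theorem lastConvergents_cons (a : ℤ) (h : lastConvergents r = ((p', q'), (p, q))) :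
    lastConvergents (a :: r) = ((p, q), (p' + a * p, q' + a * q)) := by
  simp [lastConvergents, h]

theorem exists_of_lastConvergents_cons {a : ℤ}
    (h : lastConvergents (a :: r) = ((p', q'), (p, q))) :
    ∃ P' Q', lastConvergents r = ((P', Q'), (p', q')) ∧ p = P' + a * p' ∧ q = Q' + a * q' := by
  rcases hc : lastConvergents r with ⟨⟨P', Q'⟩, P, Q⟩
  rw [lastConvergents_cons a hc, Prod.mk.injEq, Prod.mk.injEq, Prod.mk.injEq] at h
  obtain ⟨⟨rfl, rfl⟩, rfl, rfl⟩ := h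
  exact ⟨P', Q', rfl, rfl, rfl⟩

theorem lastConvergents_det (h : lastConvergents r = ((p', q'), (p, q))) :
    p' * q - q' * p = 1 ∨ p' * q - q' * p = -1 := by
  induction r generalizing p' q' p q with
  | nil => obtain ⟨rfl, rfl, rfl, rfl⟩ := lastConvergents_nil h; norm_num
  | cons a r ih =>
    obtain ⟨P', Q', hc, rfl, rfl⟩ := exists_of_lastConvergents_cons h
    rcases ih hc with h | h
    · exact .inr (by linear_combination -h)
    · exact .inl (by linear_combination -h)

theorem lastConvergents_abs_den_lt (hr : TwoLeAbs r)
    (h : lastConvergents r = ((p', q'), (p, q))) : |q'| < |q| := by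
  induction r generalizing p' q' p q with
  | nil => obtain ⟨rfl, rfl, rfl, rfl⟩ := lastConvergents_nil h; norm_num
  | cons a r ih =>
    obtain ⟨P', Q', hc, rfl, rfl⟩ := exists_of_lastConvergents_cons h
    have hlt := ih hr.of_cons hc
    have ha := hr.head
    calc |q'| < |a| * |q'| - |Q'| := by nlinarith [abs_nonneg Q']
      _ = |a * q'| - |-Q'| := by rw [abs_mul, abs_neg]
      _ ≤ |Q' + a * q'| := by
        have := abs_sub_abs_le_abs_sub (a * q') (-Q')
        rwa [sub_neg_eq_add, add_comm] at this

theorem foldl_eq_div_of_lastConvergents (hr : TwoLeAbs r)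
    (h : lastConvergents r = ((p', q'), (p, q))) {y : ℚ} (hy : |y| ≤ 1) :
    (q' * y + q : ℚ) ≠ 0 ∧
      r.foldl (fun (t : ℚ) (a : ℤ) => 1 / (a + t)) y = (p' * y + p) / (q' * y + q) := by
  induction r generalizing p' q' p q y with
  | nil =>
    obtain ⟨rfl, rfl, rfl, rfl⟩ := lastConvergents_nil h
    simp
  | cons a r ih =>
    obtain ⟨P', Q', hc, rfl, rfl⟩ := exists_of_lastConvergents_cons h
    have ha : (2 : ℚ) ≤ |(a : ℚ)| := by exact_mod_cast hr.head
    have hay : 1 ≤ |(a + y : ℚ)| := by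
      have := abs_sub_abs_le_abs_sub (a : ℚ) (-y)
      rw [abs_neg, sub_neg_eq_add] at this
      linarith
    have hay0 : (a + y : ℚ) ≠ 0 := abs_pos.mp (by linarith)
    obtain ⟨hne, heq⟩ := ih hr.of_cons hc (y := 1 / (a + y)) (by
      rw [abs_div, abs_one]; exact div_le_one_of_le₀ hay (abs_nonneg _))
    have hden : (Q' * (1 / (a + y)) + q' : ℚ) * (a + y) = q' * y + ↑(Q' + a * q') := by
      field_simp; push_cast; ring
    refine ⟨?_, ?_⟩
    · rw [← hden]; exact mul_ne_zero hne hay0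
    · rw [List.foldl_cons, heq, ← hden, ← mul_div_mul_right _ _ hay0]
      congr 1
      field_simp; push_cast; ring

theorem cfVal_reverse_eq_div (hr : TwoLeAbs r) (h : lastConvergents r = ((p', q'), (p, q))) :
    cfVal r.reverse = p / q := by
  rw [← List.append_nil r.reverse, cfVal_reverse_append, cfVal,
    (foldl_eq_div_of_lastConvergents hr h (y := 0) (by simp)).2]
  simp

theorem cfVal_reverse_cons_eq_div (hr : TwoLeAbs r) (h : lastConvergents r = ((p', q'), (p, q)))
    {z : ℤ} (hz : z ≠ 0) : cfVal (z :: r).reverse = (p' + p * z) / (q' + q * z) := by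
  have hz' : (z : ℚ) ≠ 0 := by exact_mod_cast hz
  have hzabs : 1 ≤ |(z : ℚ)| := by exact_mod_cast Int.one_le_abs hz
  obtain ⟨-, heq⟩ := foldl_eq_div_of_lastConvergents hr h (y := 1 / z) (by
    rw [abs_div, abs_one]; exact div_le_one_of_le₀ hzabs (abs_nonneg _))
  have hz1 : cfVal [z] = 1 / z := by simp [cfVal]
  rw [List.reverse_cons, cfVal_reverse_append, hz1, heq, ← mul_div_mul_right _ _ hz']
  congr 1 <;> field_simp

end Convergents

theorem sign_mul_mul_add_mul_sub_sign_pos {a q q' : ℤ} (ha : 2 ≤ |a|) (hq : |q'| < |q|) :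
    0 < a.sign * q * (q' + q * (a - a.sign)) := by
  have hqq' : |q * q'| < q * q := by
    rw [abs_mul, ← abs_mul_abs_self q]
    exact mul_lt_mul_of_pos_left hq (by linarith [abs_nonneg q'])
  have h1 := abs_lt.mp hqq'
  rcases lt_or_gt_of_ne (show a ≠ 0 by grind) with h | h
  · rw [Int.sign_eq_neg_one_of_neg h]; rw [abs_of_neg h] at ha
    nlinarith [mul_nonneg (by linarith : (0 : ℤ) ≤ -a - 2) (mul_self_nonneg q)]
  · rw [Int.sign_eq_one_of_pos h]; rw [abs_of_pos h] at ha
    nlinarith [mul_nonneg (by linarith : (0 : ℤ) ≤ a - 2) (mul_self_nonneg q)]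

theorem isFareyParents_cfVal {a : ℤ} {r : List ℤ} (hr : TwoLeAbs r) (ha : 2 ≤ |a|) :
    IsFareyParents (cfVal (a :: r).reverse) (cfVal r.reverse)
      (cfVal ((a - a.sign) :: r).reverse) := by
  rcases hc : lastConvergents r with ⟨⟨p', q'⟩, p, q⟩
  have ha0 : a ≠ 0 := by grind
  have has0 : a - a.sign ≠ 0 := by grind
  have hs : a.sign = 1 ∨ a.sign = -1 := by grind
  have hbd := sign_mul_mul_add_mul_sub_sign_pos ha (lastConvergents_abs_den_lt hr hc)
  set s := a.sign
  have hdet : s * p * (q' + q * (a - s)) - s * q * (p' + p * (a - s)) = 1 ∨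
      s * p * (q' + q * (a - s)) - s * q * (p' + p * (a - s)) = -1 := by
    rcases lastConvergents_det hc with h | h <;> rcases hs with h' | h' <;> rw [h']
    exacts [.inr (by linear_combination -h), .inl (by linear_combination h),
      .inl (by linear_combination -h), .inr (by linear_combination h)]
  have hs0 : (s : ℚ) ≠ 0 := by rcases hs with h | h <;> rw [h] <;> norm_num
  -- `x = (p' + p * a) / (q' + q * a)` is the mediant of `(s * p) / (s * q)` and
  -- `(p' + p * (a - s)) / (q' + q * (a - s))`
  convert isFareyParents_of_det hbd hdet using 1
  · rw [cfVal_reverse_cons_eq_div hr hc ha0]; push_cast; congr 1 <;> ring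
  · rw [cfVal_reverse_eq_div hr hc]; push_cast; exact (mul_div_mul_left _ _ hs0).symm
  · rw [cfVal_reverse_cons_eq_div hr hc has0]; push_cast; ring

/-- Entries are listed last one first, so that the Farey parents change only the head. -/
noncomputable def depthRev (r : List ℤ) : ℕ := fareyDepth (cfVal r.reverse)

theorem depthRev_nil : depthRev [] = 0 :=
  fareyDepth_eq_zero_of_den_eq_one rfl

theorem depthRev_singleton_of_isUnit {e : ℤ} (he : IsUnit e) : depthRev [e] = 0 :=
  fareyDepth_eq_zero_of_den_eq_one (by
    rcases Int.isUnit_iff.mp he with rfl | rfl <;> norm_num [cfVal])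

theorem depthRev_cons {a : ℤ} {r : List ℤ} (hr : TwoLeAbs r) (ha : 2 ≤ |a|) :
    depthRev (a :: r) = 1 + min (depthRev r) (depthRev ((a - a.sign) :: r)) :=
  (isFareyParents_cfVal hr ha).fareyDepth_eq

theorem depthRev_cons_cons_of_isUnit {e : ℤ} (he : IsUnit e) (b : ℤ) (r : List ℤ) :
    depthRev (e :: b :: r) = depthRev ((b + e) :: r) := by
  rw [depthRev, depthRev, cfVal_reverse_cons_cons_of_isUnit he]

theorem depthRev_le_succ_depthRev_cons {v : List ℤ} (hv : TwoLeAbs v) {e : ℤ}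
    (he : IsUnit e) : depthRev v ≤ 1 + depthRev (e :: v) := by
  cases v with
  | nil => rw [depthRev_nil]; omega
  | cons b v =>
    have hb := hv.head
    have := Int.isUnit_iff.mp he
    rw [depthRev_cons_cons_of_isUnit he, depthRev_cons hv.of_cons hb]
    by_cases hsign : e = b.sign
    · have hbe : 2 ≤ |b + e| := by grind
      have hsub : b + e - (b + e).sign = b := by grind
      rw [depthRev_cons hv.of_cons hbe, hsub, depthRev_cons hv.of_cons hb]
      omega
    · have hsub : b + e = b - b.sign := by grind
      rw [hsub]
      omega

theorem depthRev_cons_of_three_le_abs {v : List ℤ} (hv : TwoLeAbs v) {m : ℤ} (hm : 3 ≤ |m|) :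
    depthRev (m :: v) = 1 + depthRev v := by
  rw [depthRev_cons hv (by linarith)]
  suffices depthRev v ≤ depthRev ((m - m.sign) :: v) by omega
  by_cases h4 : 4 ≤ |m|
  · rw [depthRev_cons_of_three_le_abs hv (m := m - m.sign) (by grind)]
    omega
  · -- `|m| = 3`: the parent `m - sign m = 2 * sign m` has in turn the parent `sign m`
    have h2 : 2 ≤ |m - m.sign| := by grind
    have hsub : m - m.sign - (m - m.sign).sign = m.sign := by grind
    have hbump := depthRev_le_succ_depthRev_cons hv (e := m.sign) (Int.isUnit_iff.mpr (by grind))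
    rw [depthRev_cons hv h2, hsub]
    omega
termination_by m.natAbs
decreasing_by grind

/-- The head of `u` may be `±1`: then it is absorbed into the next entry, or into `m`. -/
theorem depthRev_append_cons {v : List ℤ} (hv : TwoLeAbs v) {m : ℤ} (hm : 4 ≤ |m|) :
    ∀ u : List ℤ, TwoLeAbs u.tail → 0 ∉ u →
      depthRev (u ++ m :: v) = 1 + depthRev u + depthRev v
  | [], _, _ => by
    rw [List.nil_append, depthRev_cons_of_three_le_abs hv (by linarith), depthRev_nil]
  | x :: r, hr, hx => by
    change TwoLeAbs r at hr
    have hx0 : x ≠ 0 := fun h => hx (h ▸ List.mem_cons_self)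
    rcases (show (x = 1 ∨ x = -1) ∨ 2 ≤ |x| by grind) with hx1 | hx2
    · have hxu := Int.isUnit_iff.mpr hx1
      cases r with
      | nil =>
        rw [List.singleton_append, depthRev_cons_cons_of_isUnit hxu,
          depthRev_cons_of_three_le_abs hv (by grind), depthRev_singleton_of_isUnit hxu]
      | cons b r =>
        have hbx : 0 ∉ (b + x) :: r := by
          rw [List.mem_cons, not_or]
          exact ⟨by grind [hr.head], hr.of_cons.zero_notMem⟩
        have := depthRev_append_cons hv hm ((b + x) :: r) hr.of_cons hbx
        rw [List.cons_append] at this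
        rw [List.cons_append, List.cons_append, depthRev_cons_cons_of_isUnit hxu,
          depthRev_cons_cons_of_isUnit hxu, this]
    · have hsub : 0 ∉ (x - x.sign) :: r := by
        rw [List.mem_cons, not_or]
        exact ⟨by grind, hr.zero_notMem⟩
      have h1 := depthRev_append_cons hv hm r hr.tail hr.zero_notMem
      have h2 := depthRev_append_cons hv hm ((x - x.sign) :: r) hr hsub
      rw [List.cons_append] at h2
      rw [List.cons_append, depthRev_cons (hr.append_cons (by linarith) hv) hx2,
        depthRev_cons hr hx2, h1, h2]
      omega
termination_by u => (u.map Int.natAbs).sum + u.length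
decreasing_by
  all_goals simp only [List.map_cons, List.sum_cons, List.length_cons]
  all_goals grind

theorem stmt8_general (A B : List ℤ)
    (hAe : ∀ a ∈ A, Even a ∧ a ≠ 0) (hBe : ∀ b ∈ B, Even b ∧ b ≠ 0)
    (c : ℤ) (hc : 4 ≤ |2 * c|) :
    fareyDepth (cfVal (A ++ (2 * c) :: B)) = 1 + fareyDepth (cfVal A) + fareyDepth (cfVal B) := by
  have hA := TwoLeAbs.reverse_of_even hAe
  have hB := TwoLeAbs.reverse_of_even hBe
  have := depthRev_append_cons hA hc B.reverse hB.tail hB.zero_notMem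
  simp only [depthRev, List.reverse_append, List.reverse_cons, List.reverse_reverse,
    List.append_assoc, List.singleton_append] at this
  omega

/-- If `a` and `b` are nonempty lists of even nonzero integers and `c` is an integer
with `|2c| ≥ 4`, then `d([a ⧺ (2c) ⧺ b]) = 1 + d([a]) + d([b])`. -/
theorem stmt8 (A B : List ℤ) (hA : A ≠ []) (hB : B ≠ [])
    (hAe : ∀ a ∈ A, Even a ∧ a ≠ 0) (hBe : ∀ b ∈ B, Even b ∧ b ≠ 0)
    (c : ℤ) (hc : 4 ≤ |2 * c|) :
    fareyDepth (cfVal (A ++ (2 * c) :: B)) = 1 + fareyDepth (cfVal A) + fareyDepth (cfVal B) :=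
  stmt8_general A B hAe hBe c hc
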